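/- Let n,d ∈ ℕ with n,d ≥ 1, let V ⊆ ℝⁿ be an (n,d)-assembly, and let x ∈ V. Then V is not d-dimensional in ℝⁿ near x; that is, there exists no (ℝⁿ,V,d)-chart near x. -/

import Mathlib

noncomputable section

/-- The set of real points of the zero locus of an ideal of `ℝ[X₁,…,Xₙ]`. -/
def realZeros {n : ℕ} (I : Ideal (MvPolynomial (Fin n) ℝ)) : Set (Fin n → ℝ) :=
  {x | ∀ f ∈ I, MvPolynomial.eval x f = 0}

/-- The slice `ℝ^d × {0} ⊆ ℝⁿ`: points whose last `n - d` coordinates vanish. -/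
def coordSlice (n d : ℕ) : Set (Fin n → ℝ) :=
  {y | ∀ i : Fin n, d ≤ (i : ℕ) → y i = 0}

/-- There is an `(ℝⁿ, S, d)`-chart near `x`: a `C^∞` diffeomorphism `φ` from an open
neighborhood `D` of `x` onto all of `ℝⁿ` (with smooth inverse `ψ`) carrying `S ∩ D` onto
`ℝ^d × {0}`. -/
def HasChartNear (n d : ℕ) (S : Set (Fin n → ℝ)) (x : Fin n → ℝ) : Prop :=
  d ≤ n ∧ ∃ (D : Set (Fin n → ℝ)) (φ ψ : (Fin n → ℝ) → (Fin n → ℝ)),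
    IsOpen D ∧ x ∈ D ∧
    ContDiffOn ℝ (⊤ : ℕ∞) φ D ∧ ContDiff ℝ (⊤ : ℕ∞) ψ ∧
    (∀ y ∈ D, ψ (φ y) = y) ∧ (∀ z, φ (ψ z) = z) ∧ (∀ z, ψ z ∈ D) ∧
    φ '' (S ∩ D) = coordSlice n d

/-- `S` is a locally closed `d`-submanifold of `ℝⁿ`. -/
def IsLCSubmanifold (n d : ℕ) (S : Set (Fin n → ℝ)) : Prop :=
  S.Nonempty ∧ ∀ x ∈ S, HasChartNear n d S x

/-- `V ⊆ ℝⁿ` is an `(n,d)`-assembly: `V` is empty, or a finite union of pairwise-disjoint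
locally closed submanifolds of `ℝⁿ`, each of dimension `< d`. -/
def IsAssembly (n d : ℕ) (V : Set (Fin n → ℝ)) : Prop :=
  V = ∅ ∨ ∃ (k : ℕ) (Vs : Fin k → Set (Fin n → ℝ)) (ds : Fin k → ℕ),
    Set.univ.PairwiseDisjoint Vs ∧ V = ⋃ j, Vs j ∧
    ∀ j, ds j < d ∧ IsLCSubmanifold n (ds j) (Vs j)

/-- A commutative local ring is *regular* if it is Noetherian and the dimension of its
cotangent space (as a vector space over the residue field) equals its Krull dimension. -/
def IsRegularLocal (R : Type*) [CommRing R] [IsLocalRing R] : Prop :=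
  IsNoetherianRing R ∧
    (Module.finrank (IsLocalRing.ResidueField R) (IsLocalRing.CotangentSpace R) :
      WithBot (WithTop ℕ)) = ringKrullDim R

/-- `P` is a prime ideal of `R` whose localization `R_P` is a regular local ring. -/
def RegularAtPrime {R : Type*} [CommRing R] (P : Ideal R) : Prop :=
  ∃ hP : P.IsPrime, letI := hP; IsRegularLocal (Localization P.primeCompl)

/-- The maximal ideal `m_x` of polynomials vanishing at `x ∈ ℝⁿ`. -/
def vanishingIdeal {n : ℕ} (x : Fin n → ℝ) : Ideal (MvPolynomial (Fin n) ℝ) :=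
  RingHom.ker (MvPolynomial.eval x)

namespace AssemblyAux

open Set

def sliceEmb (n d : ℕ) : (Fin d → ℝ) → (Fin n → ℝ) :=
  fun y i => if h : (i : ℕ) < d then y ⟨i, h⟩ else 0

lemma sliceEmb_isometry {n d : ℕ} (hdn : d ≤ n) : Isometry (sliceEmb n d) := by
  refine isometry_iff_nndist_eq.2 fun y y' => ?_
  rw [nndist_pi_def, nndist_pi_def]
  apply le_antisymm
  · refine Finset.sup_le fun i _ => ?_
    by_cases h : (i : ℕ) < d
    · have : nndist (sliceEmb n d y i) (sliceEmb n d y' i) = nndist (y ⟨i, h⟩) (y' ⟨i, h⟩) := by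
        simp [sliceEmb, h]
      rw [this]
      exact Finset.le_sup (f := fun b : Fin d => nndist (y b) (y' b)) (Finset.mem_univ _)
    · have : nndist (sliceEmb n d y i) (sliceEmb n d y' i) = 0 := by
        simp [sliceEmb, h]
      rw [this]
      exact zero_le
  · refine Finset.sup_le fun b _ => ?_
    have hbn : (b : ℕ) < n := lt_of_lt_of_le b.isLt hdn
    have h : ((⟨(b : ℕ), hbn⟩ : Fin n) : ℕ) < d := b.isLt
    have : nndist (y b) (y' b)
        = nndist (sliceEmb n d y ⟨(b : ℕ), hbn⟩) (sliceEmb n d y' ⟨(b : ℕ), hbn⟩) := by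
      simp [sliceEmb, h]
    rw [this]
    exact Finset.le_sup (f := fun i : Fin n => nndist (sliceEmb n d y i) (sliceEmb n d y' i))
      (Finset.mem_univ (⟨(b : ℕ), hbn⟩ : Fin n))

lemma sliceEmb_image {n d : ℕ} (hdn : d ≤ n) :
    sliceEmb n d '' Set.univ = coordSlice n d := by
  ext z
  constructor
  · rintro ⟨y, -, rfl⟩
    intro i hi
    simp [sliceEmb, Nat.not_lt.2 hi]
  · intro hz
    refine ⟨fun b => z ⟨(b : ℕ), lt_of_lt_of_le b.isLt hdn⟩, mem_univ _, ?_⟩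
    funext i
    by_cases h : (i : ℕ) < d
    · simp only [sliceEmb]
      rw [dif_pos h]
    · simp only [sliceEmb]
      rw [dif_neg h]
      exact (hz i (Nat.not_lt.1 h)).symm

lemma dimH_coordSlice {n d : ℕ} (hdn : d ≤ n) : dimH (coordSlice n d) = d := by
  rw [← sliceEmb_image hdn, (sliceEmb_isometry hdn).dimH_image, Real.dimH_univ_pi_fin d]

lemma dimH_image_le_of_contDiffOn_isOpen {n : ℕ} {f : (Fin n → ℝ) → (Fin n → ℝ)}
    {Ω s : Set (Fin n → ℝ)} (hf : ContDiffOn ℝ 1 f Ω) (hΩ : IsOpen Ω) (hs : s ⊆ Ω) :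
    dimH (f '' s) ≤ dimH s := by
  refine dimH_image_le_of_locally_lipschitzOn fun x hx => ?_
  obtain ⟨K, t, ht, hl⟩ := (hf.contDiffAt (hΩ.mem_nhds (hs hx))).exists_lipschitzOnWith
  exact ⟨K, t, nhdsWithin_le_nhds ht, hl⟩

end AssemblyAux

open scoped ENNReal
open Set AssemblyAux

/-- Let `n, d ≥ 1`, let `V ⊆ ℝⁿ` be an `(n,d)`-assembly and let
`x ∈ V`.  Then `V` is not `d`-dimensional in `ℝⁿ` near `x`: there is no
`(ℝⁿ, V, d)`-chart near `x`. -/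
theorem assembly_not_d_dimensional
    (n d : ℕ) (hn : 1 ≤ n) (hd : 1 ≤ d)
    (V : Set (Fin n → ℝ)) (hV : IsAssembly n d V) (x : Fin n → ℝ) (hx : x ∈ V) :
    ¬ HasChartNear n d V x := by
  rintro ⟨hdn, D, φ, ψ, hD, hxD, hφ, hψ, hlinv, hrinv, hψD, himg⟩
  rcases hV with hempty | ⟨k, Vs, ds, -, hVeq, hprop⟩
  · rw [hempty] at hx; exact hx
  have key : ∀ j : Fin k, dimH (φ '' (Vs j ∩ D)) ≤ (ds j : ℝ≥0∞) := by
    intro j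
    have step : ∀ w : ↥(Vs j ∩ D), ∃ U : Set (Fin n → ℝ),
        IsOpen U ∧ φ (w : Fin n → ℝ) ∈ U ∧
        dimH (φ '' (Vs j ∩ D) ∩ U) ≤ (ds j : ℝ≥0∞) := by
      rintro ⟨w, hwV, hwD⟩
      obtain ⟨hen, D', θ, θinv, hD', hwD', hθ, hθinv, hl', hr', hinD', himg'⟩ :=
        (hprop j).2.2 w hwV
      refine ⟨ψ ⁻¹' (D' ∩ D), (hD'.inter hD).preimage hψ.continuous, ?_, ?_⟩
      · show ψ (φ w) ∈ D' ∩ D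
        rw [hlinv w hwD]
        exact ⟨hwD', hwD⟩
      · set Ω : Set (Fin n → ℝ) := θinv ⁻¹' (D' ∩ D) with hΩ
        have hΩopen : IsOpen Ω := (hD'.inter hD).preimage hθinv.continuous
        have hf : ContDiffOn ℝ 1 (φ ∘ θinv) Ω :=
          (hφ.of_le (by simp)).comp ((hθinv.of_le (by simp)).contDiffOn) fun z hz => hz.2
        have hincl : φ '' (Vs j ∩ D) ∩ (ψ ⁻¹' (D' ∩ D)) ⊆
            (φ ∘ θinv) '' (coordSlice n (ds j) ∩ Ω) := by
          rintro z ⟨⟨w', ⟨hw'V, hw'D⟩, rfl⟩, hzU⟩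
          have hw'DD : w' ∈ D' ∩ D := by
            have := hzU
            rw [Set.mem_preimage, hlinv w' hw'D] at this
            exact this
          have hθw' : θinv (θ w') = w' := hl' w' hw'DD.1
          refine ⟨θ w', ⟨?_, ?_⟩, ?_⟩
          · rw [← himg']
            exact Set.mem_image_of_mem θ ⟨hw'V, hw'DD.1⟩
          · show θinv (θ w') ∈ D' ∩ D
            rw [hθw']
            exact hw'DD
          · show φ (θinv (θ w')) = φ w'
            rw [hθw']
        calc dimH (φ '' (Vs j ∩ D) ∩ (ψ ⁻¹' (D' ∩ D)))
            ≤ dimH ((φ ∘ θinv) '' (coordSlice n (ds j) ∩ Ω)) := dimH_mono hincl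
          _ ≤ dimH (coordSlice n (ds j) ∩ Ω) :=
              dimH_image_le_of_contDiffOn_isOpen hf hΩopen Set.inter_subset_right
          _ ≤ dimH (coordSlice n (ds j)) := dimH_mono Set.inter_subset_left
          _ = (ds j : ℝ≥0∞) := dimH_coordSlice hen
    choose U hUo hUm hUd using step
    obtain ⟨T, hTc, hTeq⟩ := TopologicalSpace.isOpen_iUnion_countable U hUo
    have hcov : φ '' (Vs j ∩ D) ⊆ ⋃ w ∈ T, (φ '' (Vs j ∩ D) ∩ U w) := by
      rintro z ⟨w', hw', rfl⟩
      have h1 : φ w' ∈ ⋃ i, U i := Set.mem_iUnion.2 ⟨⟨w', hw'⟩, hUm _⟩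
      rw [← hTeq] at h1
      obtain ⟨i, hi, hmem⟩ := Set.mem_iUnion₂.1 h1
      exact Set.mem_iUnion₂.2 ⟨i, hi, ⟨Set.mem_image_of_mem φ hw', hmem⟩⟩
    calc dimH (φ '' (Vs j ∩ D)) ≤ dimH (⋃ w ∈ T, (φ '' (Vs j ∩ D) ∩ U w)) := dimH_mono hcov
      _ = ⨆ w ∈ T, dimH (φ '' (Vs j ∩ D) ∩ U w) := dimH_bUnion hTc _
      _ ≤ (ds j : ℝ≥0∞) := iSup₂_le fun w _ => hUd w
  have h1 : φ '' (V ∩ D) = ⋃ j, φ '' (Vs j ∩ D) := by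
    rw [hVeq, Set.iUnion_inter, Set.image_iUnion]
  have h2 : (d : ℝ≥0∞) ≤ ((d - 1 : ℕ) : ℝ≥0∞) := by
    calc (d : ℝ≥0∞) = dimH (coordSlice n d) := (dimH_coordSlice hdn).symm
      _ = dimH (φ '' (V ∩ D)) := by rw [himg]
      _ = ⨆ j, dimH (φ '' (Vs j ∩ D)) := by rw [h1, dimH_iUnion]
      _ ≤ ((d - 1 : ℕ) : ℝ≥0∞) :=
          iSup_le fun j => (key j).trans (Nat.cast_le.2 (Nat.le_sub_one_of_lt (hprop j).1))
  have := Nat.cast_le.1 h2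
  omega
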